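/- arXiv:1804.01324 — 2 statements merged into one kernel-verified Lean document; each statement's English description precedes it below -/
import Mathlib

section
/- The function F : ℝ^(n×N) → ℝ, F(p) = √(ε² + |p|²) − ε (with ε > 0 and |·| the Frobenius norm), is convex, nonnegative, of linear growth (|p| − ε ≤ F(p) ≤ |p|), and its second derivative satisfies ν₄(1+|p|)^(−3)|q|² ≤ D²F(p)(q,q) ≤ ν₅|q|²/(1+|p|) for all p, q and suitable positive constants ν₄, ν₅ depending only on ε. -/
open Set

set_option maxHeartbeats 1600000 in
theorem sqrt_eps_density_mu_elliptic (n N : ℕ) (ε : ℝ) (hε : 0 < ε)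
    (F : EuclideanSpace ℝ (Fin n × Fin N) → ℝ)
    (hF : ∀ p, F p = Real.sqrt (ε ^ 2 + ‖p‖ ^ 2) - ε) :
    ConvexOn ℝ univ F ∧
    (∀ p, 0 ≤ F p) ∧
    (∀ p, ‖p‖ - ε ≤ F p ∧ F p ≤ ‖p‖) ∧
    ∃ ν₄ ν₅ : ℝ, 0 < ν₄ ∧ 0 < ν₅ ∧
      ∀ p q : EuclideanSpace ℝ (Fin n × Fin N),
        ν₄ * (1 + ‖p‖) ^ (-(3:ℝ)) * ‖q‖ ^ 2 ≤ iteratedFDeriv ℝ 2 F p ![q, q] ∧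
        iteratedFDeriv ℝ 2 F p ![q, q] ≤ ν₅ * ‖q‖ ^ 2 / (1 + ‖p‖) := by
  have hFeq : F = fun p => Real.sqrt (ε ^ 2 + ‖p‖ ^ 2) - ε := funext hF
  subst hFeq
  set E := EuclideanSpace ℝ (Fin n × Fin N) with hE
  set g : E → ℝ := fun p => Real.sqrt (ε ^ 2 + ‖p‖ ^ 2) with hg
  have hpos : ∀ p : E, 0 < ε ^ 2 + ‖p‖ ^ 2 := fun p => by positivity
  have hgpos : ∀ p : E, 0 < g p := fun p => Real.sqrt_pos.2 (hpos p)
  have hgsq : ∀ p : E, g p ^ 2 = ε ^ 2 + ‖p‖ ^ 2 := fun p => Real.sq_sqrt (hpos p).le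
  have hgε : ∀ p : E, ε ≤ g p := fun p => by
    nlinarith [hgsq p, hgpos p, sq_nonneg ‖p‖]
  have hgnorm : ∀ p : E, ‖p‖ ≤ g p := fun p => by
    nlinarith [hgsq p, hgpos p, norm_nonneg p, sq_nonneg ε]
  have hgle : ∀ p : E, g p ≤ ε + ‖p‖ := fun p => by
    nlinarith [hgsq p, hgpos p, norm_nonneg p, mul_nonneg hε.le (norm_nonneg p)]
  let A : E →L[ℝ] E →L[ℝ] ℝ := innerSL ℝ
  -- first derivative
  have hasg : ∀ p : E, HasFDerivAt g ((g p)⁻¹ • A p) p := by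
    intro p
    have h1 : HasFDerivAt (fun x : E => ε ^ 2 + ‖x‖ ^ 2) (2 • (A p)) p := by
      simpa [A] using (hasFDerivAt_id p).norm_sq
    have h2 := (Real.hasDerivAt_sqrt (hpos p).ne').comp_hasFDerivAt p h1
    refine HasFDerivAt.congr_fderiv h2 ?_
    ext q
    have hne := (hgpos p).ne'
    simp only [ContinuousLinearMap.smul_apply, smul_eq_mul, two_smul,
      ContinuousLinearMap.add_apply, ← hg]
    field_simp
    simp only [hg]
    ring
  have hasF : ∀ p : E, HasFDerivAt (fun x : E => Real.sqrt (ε ^ 2 + ‖x‖ ^ 2) - ε)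
      ((g p)⁻¹ • A p) p := fun p => (hasg p).sub_const ε
  have hfd : fderiv ℝ (fun x : E => Real.sqrt (ε ^ 2 + ‖x‖ ^ 2) - ε)
      = fun p => (g p)⁻¹ • A p := funext fun p => (hasF p).fderiv
  -- second derivative
  have hasc : ∀ p : E, HasFDerivAt (fun x => (g x)⁻¹)
      ((-(g p ^ 2)⁻¹) • ((g p)⁻¹ • A p)) p := fun p =>
    (hasDerivAt_inv (hgpos p).ne').comp_hasFDerivAt p (hasg p)
  have hasΦ : ∀ p : E, HasFDerivAt (fun x => (g x)⁻¹ • A x)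
      ((g p)⁻¹ • A + ((-(g p ^ 2)⁻¹) • ((g p)⁻¹ • A p)).smulRight (A p)) p :=
    fun p => (hasc p).smul A.hasFDerivAt
  have key : ∀ p q : E, iteratedFDeriv ℝ 2 (fun x : E => Real.sqrt (ε ^ 2 + ‖x‖ ^ 2) - ε) p ![q, q]
      = (g p)⁻¹ * ‖q‖ ^ 2 - (g p)⁻¹ ^ 3 * (inner ℝ p q : ℝ) ^ 2 := by
    intro p q
    rw [iteratedFDeriv_two_apply, hfd, (hasΦ p).fderiv]
    have hne := (hgpos p).ne'
    simp only [Matrix.cons_val_zero, Matrix.cons_val_one, Matrix.head_cons,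
      ContinuousLinearMap.add_apply, ContinuousLinearMap.smul_apply,
      ContinuousLinearMap.smulRight_apply, A, innerSL_apply_apply, smul_eq_mul,
      real_inner_self_eq_norm_sq, neg_smul, neg_mul]
    field_simp
    simp only [ContinuousLinearMap.neg_apply, ContinuousLinearMap.smul_apply, innerSL_apply_apply,
      smul_eq_mul, real_inner_self_eq_norm_sq]
    rw [show ((innerSL ℝ) p) q = (inner ℝ p q : ℝ) from rfl,
      show ((innerSL ℝ) q) q = ‖q‖ ^ 2 from real_inner_self_eq_norm_sq q]
    have h3 : g p ^ 3 * (g p)⁻¹ ^ 3 = 1 := by rw [← mul_pow, mul_inv_cancel₀ hne, one_pow]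
    linear_combination (-(inner ℝ p q : ℝ) ^ 2) * h3
  refine ⟨?_, ?_, ?_, ?_⟩
  · -- convexity
    refine ⟨convex_univ, ?_⟩
    intro x _ y _ t s ht hs hts
    simp only [smul_eq_mul]
    set a := ‖x‖
    set b := ‖y‖
    have ha : 0 ≤ a := norm_nonneg x
    have hb : 0 ≤ b := norm_nonneg y
    set u := Real.sqrt (ε ^ 2 + a ^ 2) with hu
    set v := Real.sqrt (ε ^ 2 + b ^ 2) with hv
    have hu2 : u ^ 2 = ε ^ 2 + a ^ 2 := Real.sq_sqrt (by positivity)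
    have hv2 : v ^ 2 = ε ^ 2 + b ^ 2 := Real.sq_sqrt (by positivity)
    have hu0 : 0 ≤ u := Real.sqrt_nonneg _
    have hv0 : 0 ≤ v := Real.sqrt_nonneg _
    have huv : ε ^ 2 + a * b ≤ u * v := by
      have h1 : (ε ^ 2 + a * b) ^ 2 ≤ (u * v) ^ 2 := by
        nlinarith [sq_nonneg (a - b), mul_nonneg ha hb]
      have h2 : 0 ≤ ε ^ 2 + a * b := by positivity
      nlinarith [mul_nonneg hu0 hv0]
    have step1 : Real.sqrt (ε ^ 2 + ‖t • x + s • y‖ ^ 2)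
        ≤ Real.sqrt (ε ^ 2 + (t * a + s * b) ^ 2) := by
      apply Real.sqrt_le_sqrt
      have hn : ‖t • x + s • y‖ ≤ t * a + s * b := by
        calc ‖t • x + s • y‖ ≤ ‖t • x‖ + ‖s • y‖ := norm_add_le _ _
        _ = t * a + s * b := by rw [norm_smul, norm_smul]; simp [abs_of_nonneg ht, abs_of_nonneg hs, a, b]
      have := norm_nonneg (t • x + s • y)
      nlinarith
    have step2 : Real.sqrt (ε ^ 2 + (t * a + s * b) ^ 2) ≤ t * u + s * v := by
      rw [show ε ^ 2 + (t * a + s * b) ^ 2 = (t*u+s*v)^2 - ((t*u+s*v)^2 - (ε ^ 2 + (t * a + s * b) ^ 2)) by ring]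
      have hts2 : (t + s) ^ 2 = 1 := by rw [hts]; norm_num
      have hkey : ε ^ 2 + (t * a + s * b) ^ 2 ≤ (t * u + s * v) ^ 2 := by
        nlinarith [mul_le_mul_of_nonneg_left hu2.ge (sq_nonneg t),
          mul_le_mul_of_nonneg_left hv2.ge (sq_nonneg s),
          mul_le_mul_of_nonneg_left huv (mul_nonneg ht hs),
          mul_le_mul_of_nonneg_left hts2.le (sq_nonneg ε),
          mul_le_mul_of_nonneg_left hts2.ge (sq_nonneg ε)]
      calc Real.sqrt _ ≤ Real.sqrt ((t*u+s*v)^2) := Real.sqrt_le_sqrt (by nlinarith)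
      _ = t*u+s*v := Real.sqrt_sq (by positivity)
    have := le_trans step1 step2
    nlinarith [hts, hε.le]
  · intro p
    have := hgε p
    simp only [← hg, sub_nonneg]
    linarith
  · intro p
    have h1 := hgnorm p
    have h2 := hgle p
    constructor <;> simp only [← hg] <;> linarith
  · refine ⟨ε ^ 2 / (1 + ε) ^ 3, (1 + ε) / ε, by positivity, by positivity, ?_⟩
    intro p q
    rw [key p q]
    have hs := hgpos p
    have h1 := hgε p
    have h2 := hgnorm p
    have h3 := hgle p
    have hnp : (0:ℝ) ≤ ‖p‖ := norm_nonneg p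
    have hnq : (0:ℝ) ≤ ‖q‖ := norm_nonneg q
    have hCS : (inner ℝ p q : ℝ) ^ 2 ≤ ‖p‖ ^ 2 * ‖q‖ ^ 2 := by
      have h := abs_real_inner_le_norm p q
      nlinarith [abs_nonneg (inner ℝ p q : ℝ), sq_abs (inner ℝ p q : ℝ)]
    have hrpow : (1 + ‖p‖) ^ (-(3:ℝ)) = ((1 + ‖p‖) ^ 3)⁻¹ := by
      rw [Real.rpow_neg (by positivity), show (3:ℝ) = ((3:ℕ):ℝ) by norm_num,
        Real.rpow_natCast]
    constructor
    · rw [hrpow]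
      have hlow : ε ^ 2 * ‖q‖ ^ 2 / g p ^ 3
          ≤ (g p)⁻¹ * ‖q‖ ^ 2 - (g p)⁻¹ ^ 3 * (inner ℝ p q : ℝ) ^ 2 := by
        rw [div_le_iff₀ (by positivity)]
        have heq : ((g p)⁻¹ * ‖q‖ ^ 2 - (g p)⁻¹ ^ 3 * (inner ℝ p q : ℝ) ^ 2) * g p ^ 3
            = g p ^ 2 * ‖q‖ ^ 2 - (inner ℝ p q : ℝ) ^ 2 := by
          field_simp
        rw [heq, hgsq p]
        nlinarith [hCS]
      refine le_trans ?_ hlow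
      have heq2 : ε ^ 2 / (1 + ε) ^ 3 * ((1 + ‖p‖) ^ 3)⁻¹ * ‖q‖ ^ 2
          = ε ^ 2 * ‖q‖ ^ 2 / ((1 + ε) ^ 3 * (1 + ‖p‖) ^ 3) := by
        field_simp
      rw [heq2]
      have hcube : g p ^ 3 ≤ (1 + ε) ^ 3 * (1 + ‖p‖) ^ 3 := by
        rw [← mul_pow]
        exact pow_le_pow_left₀ hs.le (by nlinarith) 3
      rw [div_le_div_iff₀ (by positivity) (by positivity)]
      nlinarith [mul_le_mul_of_nonneg_left hcube (by positivity : (0:ℝ) ≤ ε ^ 2 * ‖q‖ ^ 2)]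
    · have hup : (g p)⁻¹ * ‖q‖ ^ 2 - (g p)⁻¹ ^ 3 * (inner ℝ p q : ℝ) ^ 2
          ≤ ‖q‖ ^ 2 / g p := by
        have : ‖q‖ ^ 2 / g p = (g p)⁻¹ * ‖q‖ ^ 2 := by ring
        rw [this]
        nlinarith [sq_nonneg (inner ℝ p q : ℝ), pow_pos (inv_pos.2 hs) 3,
          mul_nonneg (pow_nonneg (inv_nonneg.2 hs.le) 3) (sq_nonneg (inner ℝ p q : ℝ))]
      refine le_trans hup ?_
      rw [div_le_div_iff₀ hs (by positivity), div_mul_eq_mul_div, div_mul_eq_mul_div,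
        le_div_iff₀ hε]
      nlinarith [mul_le_mul_of_nonneg_left (show ε * (1 + ‖p‖) ≤ (1 + ε) * g p by nlinarith)
        (sq_nonneg ‖q‖)]
end

section
/- Let ρ : [0,∞) → [0,∞) be convex and increasing. Then the function F : ℝ^(n×n) → ℝ defined by F(p) = ∑_{i=1}^n ρ(λ_i(p)), where λ_1(p),...,λ_n(p) are the singular values of p (the eigenvalues of √(p pᵀ)), is convex on ℝ^(n×n). -/
open Set

/-- The singular values of a real square matrix `p`, i.e. the square roots of the
eigenvalues of the symmetric positive semidefinite matrix `p * pᵀ`. -/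
noncomputable def singVals {n : ℕ} (p : Matrix (Fin n) (Fin n) ℝ) : Fin n → ℝ :=
  fun i => Real.sqrt ((Matrix.isHermitian_mul_conjTranspose_self p).eigenvalues i)

section BallAux

open Matrix RealInnerProductSpace

variable {n : ℕ}

/-- The identity linear equivalence between plain vectors and Euclidean space. -/
private noncomputable def toE {n : ℕ} : (Fin n → ℝ) ≃ₗ[ℝ] EuclideanSpace ℝ (Fin n) :=
  (WithLp.linearEquiv 2 ℝ (Fin n → ℝ)).symm

private lemma toE_self (x : EuclideanSpace ℝ (Fin n)) : toE x = x := rfl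

private lemma singVals_nonneg (p : Matrix (Fin n) (Fin n) ℝ) (i : Fin n) :
    0 ≤ singVals p i := Real.sqrt_nonneg _

private lemma sq_singVals (p : Matrix (Fin n) (Fin n) ℝ) (i : Fin n) :
    singVals p i * singVals p i
      = (Matrix.isHermitian_mul_conjTranspose_self p).eigenvalues i :=
  Real.mul_self_sqrt (Matrix.eigenvalues_self_mul_conjTranspose_nonneg p i)

private lemma inner_euc (x y : EuclideanSpace ℝ (Fin n)) : ⟪x, y⟫ = ∑ i, x i * y i := by
  simp [PiLp.inner_apply, RCLike.inner_apply, conj_trivial]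
  exact Finset.sum_congr rfl fun _ _ => mul_comm _ _

private lemma inner_mulVec_left (p : Matrix (Fin n) (Fin n) ℝ)
    (x : EuclideanSpace ℝ (Fin n)) (a : Fin n → ℝ) :
    ⟪toE (pᴴ *ᵥ x), toE a⟫ = ⟪x, toE (p *ᵥ a)⟫ := by
  have hct : pᴴ = pᵀ := by ext i j; simp
  rw [inner_euc, inner_euc, hct]
  show (pᵀ *ᵥ x.ofLp) ⬝ᵥ a = dotProduct x.ofLp (p *ᵥ a)
  rw [Matrix.mulVec_transpose, Matrix.dotProduct_mulVec]

/-- Existence of a singular value decomposition, phrased via orthonormal bases. -/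
private lemma exists_svd (p : Matrix (Fin n) (Fin n) ℝ) :
    ∃ u v : OrthonormalBasis (Fin n) ℝ (EuclideanSpace ℝ (Fin n)),
      ∀ i, toE (p *ᵥ v i) = singVals p i • u i := by
  classical
  have hA := Matrix.isHermitian_mul_conjTranspose_self p
  set u := hA.eigenvectorBasis with hu
  have hEig : ∀ j, toE ((p * pᴴ) *ᵥ u j) = hA.eigenvalues j • u j := fun j =>
    by rw [hA.mulVec_eigenvectorBasis j, _root_.map_smul]; rfl
  have hPT : ∀ i j, ⟪toE (pᴴ *ᵥ u i), toE (pᴴ *ᵥ u j)⟫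
      = hA.eigenvalues j * ⟪u i, u j⟫ := by
    intro i j
    rw [inner_mulVec_left p (u i) (pᴴ *ᵥ u j), Matrix.mulVec_mulVec, hEig j,
      real_inner_smul_right]
  have huon : ∀ i j, ⟪u i, u j⟫ = if i = j then (1:ℝ) else 0 :=
    fun i j => orthonormal_iff_ite.mp u.orthonormal i j
  have hker : ∀ j, singVals p j = 0 → toE (pᴴ *ᵥ u j) = 0 := by
    intro j hj
    have h0 : hA.eigenvalues j = 0 := by
      have := sq_singVals p j
      rw [hj, zero_mul] at this
      exact this.symm
    have h : ⟪toE (pᴴ *ᵥ u j), toE (pᴴ *ᵥ u j)⟫ = 0 := by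
      rw [hPT j j, h0, zero_mul]
    exact inner_self_eq_zero.mp h
  set w : Fin n → EuclideanSpace ℝ (Fin n) :=
    fun i => (singVals p i)⁻¹ • toE (pᴴ *ᵥ u i) with hw
  set s : Set (Fin n) := {i | singVals p i ≠ 0} with hs
  have hwij : ∀ i j, ⟪w i, w j⟫ = (singVals p i)⁻¹ * ((singVals p j)⁻¹
      * (hA.eigenvalues j * ⟪u i, u j⟫)) := by
    intro i j
    simp only [hw]
    rw [real_inner_smul_left, real_inner_smul_right, hPT i j]
  have hwon : Orthonormal ℝ (s.restrict w) := by
    rw [orthonormal_iff_ite]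
    rintro ⟨i, hi⟩ ⟨j, hj⟩
    by_cases hij : i = j
    · subst hij
      simp only [Set.restrict_apply, Subtype.mk.injEq, if_pos rfl]
      show ⟪w i, w i⟫ = (1:ℝ)
      rw [hwij i i, huon i i, if_pos rfl, mul_one, ← sq_singVals p i]
      have hi' : singVals p i ≠ 0 := hi
      field_simp
    · have hne : (⟨i, hi⟩ : s) ≠ ⟨j, hj⟩ := by simpa using hij
      simp only [Set.restrict_apply, if_neg hne]
      show ⟪w i, w j⟫ = (0:ℝ)
      rw [hwij i j, huon i j, if_neg hij]
      ring
  obtain ⟨v, hv⟩ := hwon.exists_orthonormalBasis_extension_of_card_eq (by simp)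
  refine ⟨u, v, fun i => ?_⟩
  by_cases hi : singVals p i = 0
  · rw [hi, zero_smul]
    have hz : ∀ j, ⟪u j, toE (p *ᵥ v i)⟫ = 0 := by
      intro j
      rw [← inner_mulVec_left p (u j) (v i)]
      by_cases hj : singVals p j = 0
      · rw [hker j hj]
        exact inner_zero_left _
      · have hwj : toE (pᴴ *ᵥ u j) = singVals p j • w j := by
          simp only [hw]
          rw [smul_smul, mul_inv_cancel₀ hj, one_smul]
        have hvj : v j = w j := hv j hj
        have hEvi : toE (v i) = v i := toE_self (v i)
        rw [hwj, real_inner_smul_left, hEvi, ← hvj]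
        have hne : ¬ (j = i) := fun h => hj (h ▸ hi)
        rw [orthonormal_iff_ite.mp v.orthonormal j i, if_neg hne, mul_zero]
    have hx := u.sum_repr' (toE (p *ᵥ v i))
    rw [← hx]
    simp [hz]
  · rw [hv i hi]
    have e1 : (p *ᵥ (w i) : Fin n → ℝ) = (singVals p i)⁻¹ • (p *ᵥ (pᴴ *ᵥ u i)) := by
      show p *ᵥ ((singVals p i)⁻¹ • (pᴴ *ᵥ u i)) = _
      rw [Matrix.mulVec_smul]
    rw [e1, _root_.map_smul, Matrix.mulVec_mulVec, hEig i, smul_smul, ← sq_singVals p i,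
      inv_mul_cancel_left₀ hi]

/-- Expansion of `p *ᵥ x` along an SVD pair of bases. -/
private lemma mulVec_expand (p : Matrix (Fin n) (Fin n) ℝ)
    (u v : OrthonormalBasis (Fin n) ℝ (EuclideanSpace ℝ (Fin n)))
    (hsvd : ∀ i, toE (p *ᵥ v i) = singVals p i • u i)
    (x : EuclideanSpace ℝ (Fin n)) :
    toE (p *ᵥ x) = ∑ j, (⟪v j, x⟫ * singVals p j) • u j := by
  set L : EuclideanSpace ℝ (Fin n) →ₗ[ℝ] EuclideanSpace ℝ (Fin n) :=
    (toE.toLinearMap.comp p.mulVecLin).comp (toE.symm.toLinearMap) with hL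
  have hLy : ∀ y : EuclideanSpace ℝ (Fin n), toE (p *ᵥ y) = L y := fun y => rfl
  calc toE (p *ᵥ x) = L x := hLy x
    _ = L (∑ j, ⟪v j, x⟫ • v j) := by rw [v.sum_repr' x]
    _ = ∑ j, ⟪v j, x⟫ • L (v j) := by
        rw [map_sum]
        exact Finset.sum_congr rfl fun j _ => by rw [_root_.map_smul]
    _ = ∑ j, (⟪v j, x⟫ * singVals p j) • u j := by
        refine Finset.sum_congr rfl fun j _ => ?_
        rw [← hLy (v j), hsvd j, smul_smul]

/-- Key upper bound: for any orthonormal bases `b`, `c`, the sum of `ρ` of absolute values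
of "diagonal" entries is at most the sum of `ρ` of the singular values. -/
private lemma key_bound (ρ : ℝ → ℝ)
    (hρ_conv : ConvexOn ℝ (Ici (0:ℝ)) ρ)
    (hρ_mono : MonotoneOn ρ (Ici (0:ℝ)))
    (p : Matrix (Fin n) (Fin n) ℝ)
    (b c : OrthonormalBasis (Fin n) ℝ (EuclideanSpace ℝ (Fin n))) :
    ∑ i, ρ |⟪b i, toE (p *ᵥ c i)⟫| ≤ ∑ i, ρ (singVals p i) := by
  obtain ⟨u, v, hsvd⟩ := exists_svd p
  set σ := singVals p with hσ
  set a : Fin n → Fin n → ℝ := fun i j => ⟪b i, u j⟫ with ha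
  set β : Fin n → Fin n → ℝ := fun i j => ⟪v j, c i⟫ with hβ
  set C : Fin n → Fin n → ℝ := fun i j => (a i j ^ 2 + β i j ^ 2) / 2 with hC
  have parseval : ∀ (e : OrthonormalBasis (Fin n) ℝ (EuclideanSpace ℝ (Fin n)))
      (x : EuclideanSpace ℝ (Fin n)), ∑ j, ⟪e j, x⟫ ^ 2 = ‖x‖ ^ 2 := by
    intro e x
    have h := e.sum_inner_mul_inner x x
    have h2 : ∀ j, ⟪x, e j⟫ * ⟪e j, x⟫ = ⟪e j, x⟫ ^ 2 := by
      intro j; rw [real_inner_comm x (e j)]; ring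
    rw [Finset.sum_congr rfl (fun j _ => h2 j)] at h
    rw [h, real_inner_self_eq_norm_sq]
  have hrowa : ∀ i, ∑ j, a i j ^ 2 = 1 := by
    intro i
    have h := parseval u (b i)
    have h2 : ∀ j, ⟪u j, b i⟫ ^ 2 = a i j ^ 2 := by
      intro j; simp only [ha]; rw [real_inner_comm]
    rw [Finset.sum_congr rfl (fun j _ => h2 j)] at h
    rw [h, b.orthonormal.1 i]; norm_num
  have hcola : ∀ j, ∑ i, a i j ^ 2 = 1 := by
    intro j
    have h := parseval b (u j)
    rw [u.orthonormal.1 j] at h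
    rw [h]; norm_num
  have hrowβ : ∀ i, ∑ j, β i j ^ 2 = 1 := by
    intro i
    have h := parseval v (c i)
    rw [c.orthonormal.1 i] at h
    rw [h]; norm_num
  have hcolβ : ∀ j, ∑ i, β i j ^ 2 = 1 := by
    intro j
    have h := parseval c (v j)
    have h2 : ∀ i, ⟪c i, v j⟫ ^ 2 = β i j ^ 2 := by
      intro i; simp only [hβ]; rw [real_inner_comm]
    rw [Finset.sum_congr rfl (fun i _ => h2 i)] at h
    rw [h, v.orthonormal.1 j]; norm_num
  have hCnonneg : ∀ i j, 0 ≤ C i j := by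
    intro i j; simp only [hC]; positivity
  have hCrow : ∀ i, ∑ j, C i j = 1 := by
    intro i
    simp only [hC]
    rw [← Finset.sum_div, Finset.sum_add_distrib, hrowa i, hrowβ i]
    norm_num
  have hCcol : ∀ j, ∑ i, C i j = 1 := by
    intro j
    simp only [hC]
    rw [← Finset.sum_div, Finset.sum_add_distrib, hcola j, hcolβ j]
    norm_num
  have hentry : ∀ i, ⟪b i, toE (p *ᵥ c i)⟫ = ∑ j, β i j * σ j * a i j := by
    intro i
    rw [mulVec_expand p u v hsvd (c i), inner_sum]
    refine Finset.sum_congr rfl fun j _ => ?_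
    rw [real_inner_smul_right]
  have habs : ∀ i, |⟪b i, toE (p *ᵥ c i)⟫| ≤ ∑ j, C i j * σ j := by
    intro i
    rw [hentry i]
    refine (Finset.abs_sum_le_sum_abs _ _).trans ?_
    refine Finset.sum_le_sum fun j _ => ?_
    have h1 : |β i j * σ j * a i j| = |β i j * a i j| * σ j := by
      rw [abs_mul, abs_mul, abs_mul, abs_of_nonneg (singVals_nonneg p j)]
      ring
    rw [h1]
    have h2 : |β i j * a i j| ≤ C i j := by
      simp only [hC]
      rw [abs_mul]
      nlinarith [two_mul_le_add_sq (|a i j|) (|β i j|), abs_nonneg (a i j),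
        abs_nonneg (β i j), sq_abs (a i j), sq_abs (β i j)]
    exact mul_le_mul_of_nonneg_right h2 (singVals_nonneg p j)
  have hsum_nonneg : ∀ i, (0:ℝ) ≤ ∑ j, C i j * σ j := fun i =>
    Finset.sum_nonneg fun j _ => mul_nonneg (hCnonneg i j) (singVals_nonneg p j)
  have step : ∀ i, ρ |⟪b i, toE (p *ᵥ c i)⟫| ≤ ∑ j, C i j * ρ (σ j) := by
    intro i
    have h1 : ρ |⟪b i, toE (p *ᵥ c i)⟫| ≤ ρ (∑ j, C i j * σ j) :=
      hρ_mono (Set.mem_Ici.mpr (abs_nonneg _)) (Set.mem_Ici.mpr (hsum_nonneg i)) (habs i)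
    refine h1.trans ?_
    have h2 := hρ_conv.map_sum_le (t := Finset.univ) (w := C i) (p := σ)
      (fun j _ => hCnonneg i j) (hCrow i) (fun j _ => Set.mem_Ici.mpr (singVals_nonneg p j))
    simpa [smul_eq_mul] using h2
  calc ∑ i, ρ |⟪b i, toE (p *ᵥ c i)⟫|
      ≤ ∑ i, ∑ j, C i j * ρ (σ j) := Finset.sum_le_sum fun i _ => step i
    _ = ∑ j, (∑ i, C i j) * ρ (σ j) := by
        rw [Finset.sum_comm]
        exact Finset.sum_congr rfl fun j _ => (Finset.sum_mul ..).symm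
    _ = ∑ j, ρ (σ j) :=
        Finset.sum_congr rfl fun j _ => by rw [hCcol j, one_mul]

end BallAux

open Matrix RealInnerProductSpace in
theorem ball_convexity_sum (n : ℕ) (ρ : ℝ → ℝ)
    (hρ_nonneg : ∀ t, 0 ≤ t → 0 ≤ ρ t)
    (hρ_conv : ConvexOn ℝ (Ici (0:ℝ)) ρ)
    (hρ_mono : MonotoneOn ρ (Ici (0:ℝ))) :
    ConvexOn ℝ univ (fun p : Matrix (Fin n) (Fin n) ℝ => ∑ i, ρ (singVals p i)) := by
  refine ⟨convex_univ, fun p _ q _ κ μ hκ hμ hκμ => ?_⟩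
  set r := κ • p + μ • q with hr
  obtain ⟨u, v, hsvd⟩ := exists_svd r
  have huu : ∀ i, ⟪u i, u i⟫ = (1:ℝ) := by
    intro i
    rw [real_inner_self_eq_norm_sq, u.orthonormal.1 i]
    norm_num
  have hdiag : ∀ i, singVals r i = ⟪u i, toE (r *ᵥ v i)⟫ := by
    intro i
    rw [hsvd i, real_inner_smul_right, huu i, mul_one]
  have hsplit : ∀ i, ⟪u i, toE (r *ᵥ v i)⟫
      = κ * ⟪u i, toE (p *ᵥ v i)⟫ + μ * ⟪u i, toE (q *ᵥ v i)⟫ := by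
    intro i
    have h1 : (r *ᵥ v i : Fin n → ℝ) = κ • (p *ᵥ v i) + μ • (q *ᵥ v i) := by
      rw [hr, Matrix.add_mulVec, Matrix.smul_mulVec, Matrix.smul_mulVec]
    rw [h1, map_add, _root_.map_smul, _root_.map_smul, inner_add_right, real_inner_smul_right,
      real_inner_smul_right]
  have hpt : ∀ (x y : ℝ), ρ |κ * x + μ * y| ≤ κ * ρ |x| + μ * ρ |y| := by
    intro x y
    have h1 : |κ * x + μ * y| ≤ κ * |x| + μ * |y| := by
      refine (abs_add_le _ _).trans ?_
      rw [abs_mul, abs_mul, abs_of_nonneg hκ, abs_of_nonneg hμ]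
    have h2 : ρ |κ * x + μ * y| ≤ ρ (κ * |x| + μ * |y|) := by
      refine hρ_mono (Set.mem_Ici.mpr (abs_nonneg _)) (Set.mem_Ici.mpr ?_) h1
      exact add_nonneg (mul_nonneg hκ (abs_nonneg _)) (mul_nonneg hμ (abs_nonneg _))
    refine h2.trans ?_
    have h3 := hρ_conv.2 (Set.mem_Ici.mpr (abs_nonneg x)) (Set.mem_Ici.mpr (abs_nonneg y)) hκ hμ hκμ
    simpa [smul_eq_mul] using h3
  have hmain : ∑ i, ρ (singVals r i)
      ≤ κ * ∑ i, ρ |⟪u i, toE (p *ᵥ v i)⟫| + μ * ∑ i, ρ |⟪u i, toE (q *ᵥ v i)⟫| := by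
    rw [Finset.mul_sum, Finset.mul_sum, ← Finset.sum_add_distrib]
    refine Finset.sum_le_sum fun i _ => ?_
    have h0 : singVals r i = |⟪u i, toE (r *ᵥ v i)⟫| := by
      rw [← hdiag i, abs_of_nonneg (singVals_nonneg r i)]
    rw [h0, hsplit i]
    exact hpt _ _
  have hp := key_bound ρ hρ_conv hρ_mono p u v
  have hq := key_bound ρ hρ_conv hρ_mono q u v
  simp only [smul_eq_mul]
  calc ∑ i, ρ (singVals (κ • p + μ • q) i) = ∑ i, ρ (singVals r i) := by rw [← hr]
    _ ≤ _ := hmain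
    _ ≤ κ * ∑ i, ρ (singVals p i) + μ * ∑ i, ρ (singVals q i) := by
        have h1 := mul_le_mul_of_nonneg_left hp hκ
        have h2 := mul_le_mul_of_nonneg_left hq hμ
        linarith
end
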